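/- Let X be a Hausdorff topological vector space over ℝ, L : X → ℝ a continuous linear functional, P ⊆ X a subset such that P ∩ {x : L(x) ≤ c} is compact for every c ∈ ℝ, and B ⊆ X a closed linear subspace with L(b) = 0 for all b ∈ B. Then P + B is closed in X. -/

import Mathlib

open Pointwise Set

/- Near a point `z` of the closure, `P + B` agrees with `(P ∩ {f ≤ c}) + B` for any `c > f z`,
and the latter is closed as the sum of a compact and a closed set. -/
theorem IsClosed.add_left_of_isCompact_inter_le {G α : Type*} [AddGroup G] [TopologicalSpace G]
    [IsTopologicalAddGroup G] [LinearOrder α] [TopologicalSpace α] [OrderClosedTopology α]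
    [NoMaxOrder α] {f : G → α} (hf : Continuous f) {P B : Set G}
    (hP : ∀ c, IsCompact (P ∩ {x | f x ≤ c})) (hB : IsClosed B)
    (hfB : ∀ p ∈ P, ∀ b ∈ B, f (p + b) = f p) :
    IsClosed (P + B) := by
  refine isClosed_of_closure_subset fun z hz => ?_
  obtain ⟨c, hzc⟩ := exists_gt (f z)
  have hsub : {x | f x < c} ∩ (P + B) ⊆ (P ∩ {x | f x ≤ c}) + B := by
    rintro _ ⟨hlt, p, hp, b, hb, rfl⟩
    rw [mem_ofPred_eq, hfB p hp b hb] at hlt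
    exact ⟨p, ⟨hp, hlt.le⟩, b, hb, rfl⟩
  have hz' : z ∈ closure ({x | f x < c} ∩ (P + B)) :=
    (isOpen_lt hf continuous_const).inter_closure ⟨hzc, hz⟩
  exact add_subset_add_right inter_subset_left <|
    ((hB.add_left_of_isCompact (hP c)).closure_subset_iff.2 hsub) hz'

theorem stmt_10_general (X : Type*) [AddCommGroup X] [Module ℝ X] [TopologicalSpace X]
    [IsTopologicalAddGroup X]
    (L : X →L[ℝ] ℝ) (P : Set X)
    (hP : ∀ c : ℝ, IsCompact (P ∩ {x : X | L x ≤ c}))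
    (B : Submodule ℝ X) (hBclosed : IsClosed (B : Set X))
    (hLB : ∀ b ∈ B, L b = 0) :
    IsClosed (P + (B : Set X)) :=
  hBclosed.add_left_of_isCompact_inter_le L.continuous hP fun p _ b hb => by
    rw [map_add, hLB b hb, add_zero]

/-- Abstract Lemma 3.5: if the sublevel sets of a continuous linear functional `L`
inside `P` are compact and `B` is a closed subspace on which `L` vanishes,
then `P + B` is closed. -/
theorem stmt_10 (X : Type*) [AddCommGroup X] [Module ℝ X] [TopologicalSpace X]
    [IsTopologicalAddGroup X] [ContinuousSMul ℝ X] [T2Space X]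
    (L : X →L[ℝ] ℝ) (P : Set X)
    (hP : ∀ c : ℝ, IsCompact (P ∩ {x : X | L x ≤ c}))
    (B : Submodule ℝ X) (hBclosed : IsClosed (B : Set X))
    (hLB : ∀ b ∈ B, L b = 0) :
    IsClosed (P + (B : Set X)) :=
  stmt_10_general X L P hP B hBclosed hLB
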